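/- arXiv:1904.08964 — 5 statements merged into one kernel-verified Lean document; each statement's English description precedes it below -/
import Mathlib

section
/- In a read-behind system (replicas execute writes only after they are committed), let Q be a single-replica read for object o served at replica R, and let R.seq be the sequence number of the most recent write R has executed; if Q.commit ≤ R.seq, R has executed all writes with sequence number ≤ R.seq, and every write to o committed at the time the switch forwarded Q either has sequence number ≤ Q.commit or o was in the dirty set (o is not in the dirty set, since Q is a single-replica read), then R has executed all writes to o committed at forwarding time, i.e. Q reflects all writes to o committed before Q was forwarded. -/
/-- Read-behind case. If replica `R` has executed all writes with
sequence number ≤ `Rseq`, `Qcommit ≤ Rseq`, every write to `o` committed at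
forwarding time has sequence number ≤ `Qcommit` or its object is in the dirty
set, and `o` is not in the dirty set, then `R` has executed all writes to `o`
committed at forwarding time. -/
theorem harmonia_read_behind_visibility
    {Object Write : Type}
    (objOf : Write → Object) (seqOf : Write → ℕ)
    (committedAtForward : Write → Prop)  -- committed at the time the switch forwarded Q
    (executed : ℕ → Prop)                -- R has executed the write with this seq number
    (dirty : Set Object)                 -- switch dirty set at forwarding time
    (Rseq Qcommit : ℕ) (o : Object)
    (hexec : ∀ n, n ≤ Rseq → executed n)
    (hle : Qcommit ≤ Rseq)
    (hswitch : ∀ w, committedAtForward w → seqOf w ≤ Qcommit ∨ objOf w ∈ dirty)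
    (hnotdirty : o ∉ dirty) :
    ∀ w, committedAtForward w → objOf w = o → executed (seqOf w) := by
  intro w hc ho
  rcases hswitch w hc with h | h
  · exact hexec _ (h.trans hle)
  · exact absurd (ho ▸ h) hnotdirty
end

section
/- Switch invariant preservation: in the Harmonia switch state machine (Algorithm 1), after any sequence of write, write-completion, and read operations, every object with an outstanding (issued but not completed) write is in the dirty set. That is, for every write w issued with sequence number s on object o, either a write-completion with sequence number ≥ s for o has been processed, or o is in the dirty set with dirty_set(o) ≥ s. -/
/-- Switch state of Algorithm 1. -/
structure SwState (O : Type) where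
  seq : ℕ
  dirty : O → Option ℕ
  lastCommitted : ℕ

/-- Events processed by the switch. -/
inductive SwEvent (O : Type)
  | write (o : O)
  | completion (o : O) (n : ℕ)
  | read (o : O)

variable {O : Type} [DecidableEq O]

/-- One step of Algorithm 1. -/
def swStep (s : SwState O) : SwEvent O → SwState O
  | .write o => ⟨s.seq + 1, Function.update s.dirty o (some (s.seq + 1)), s.lastCommitted⟩
  | .completion o n =>
      ⟨s.seq,
       (match s.dirty o with
        | some d => if d ≤ n then Function.update s.dirty o none else s.dirty
        | none => s.dirty),
       max s.lastCommitted n⟩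
  | .read _ => s

/-- Run a trace of events. -/
def swRun (s : SwState O) (tr : List (SwEvent O)) : SwState O :=
  tr.foldl swStep s

/-- The set of (object, sequence-number) pairs of writes issued while running `tr`
from state `s`. -/
def issuedWrites : SwState O → List (SwEvent O) → Set (O × ℕ)
  | _, [] => ∅
  | s, e :: t =>
      (match e with
       | SwEvent.write o => {(o, s.seq + 1)}
       | _ => (∅ : Set (O × ℕ))) ∪ issuedWrites (swStep s e) t

/-- The set of (object, sequence-number) pairs carried by completion events in `tr`. -/
def completions : List (SwEvent O) → Set (O × ℕ)
  | [] => ∅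
  | SwEvent.completion o n :: t => {(o, n)} ∪ completions t
  | _ :: t => completions t

def swInit : SwState O := ⟨0, fun _ => none, 0⟩

def swInv (st : SwState O) : Prop := ∀ o d, st.dirty o = some d → d ≤ st.seq

lemma swInv_step (st : SwState O) (e : SwEvent O) (h : swInv st) : swInv (swStep st e) := by
  cases e with
  | write o =>
      intro o' d hd
      simp only [swStep, Function.update_apply] at hd ⊢
      split at hd
      · simp only [Option.some.injEq] at hd; omega
      · exact le_trans (h o' d hd) (Nat.le_succ _)
  | completion o n =>
      intro o' d hd
      simp only [swStep] at hd ⊢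
      rcases hcase : st.dirty o with _ | d0 <;> simp only [hcase] at hd
      · exact h o' d hd
      · split at hd
        · rw [Function.update_apply] at hd
          split at hd
          · exact absurd hd (by simp)
          · exact h o' d hd
        · exact h o' d hd
  | read o => exact h

lemma lemA : ∀ (tr : List (SwEvent O)) (st : SwState O), swInv st →
    ∀ o d, st.dirty o = some d →
      (∃ n, (o, n) ∈ completions tr ∧ d ≤ n) ∨
      (∃ d', (swRun st tr).dirty o = some d' ∧ d ≤ d') := by
  intro tr
  induction tr with
  | nil => intro st _ o d hd; exact Or.inr ⟨d, hd, le_refl d⟩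
  | cons e t ih =>
    intro st hinv o d hd
    cases e with
    | write o' =>
      by_cases heq : o' = o
      · subst heq
        have hd' : (swStep st (.write o')).dirty o' = some (st.seq + 1) := by
          simp [swStep, Function.update]
        rcases ih _ (swInv_step st _ hinv) o' _ hd' with ⟨n, hn, hle⟩ | ⟨d', hd'', hle⟩
        · exact Or.inl ⟨n, by simpa [completions] using hn,
            le_trans (le_trans (hinv o' d hd) (Nat.le_succ _)) hle⟩
        · exact Or.inr ⟨d', by simpa [swRun] using hd'',
            le_trans (le_trans (hinv o' d hd) (Nat.le_succ _)) hle⟩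
      · have hd' : (swStep st (.write o')).dirty o = some d := by
          simp [swStep, Function.update_apply, if_neg (Ne.symm heq : o ≠ o'), hd]
        rcases ih _ (swInv_step st _ hinv) o d hd' with ⟨n, hn, hle⟩ | res
        · exact Or.inl ⟨n, by simpa [completions] using hn, hle⟩
        · exact Or.inr (by simpa [swRun] using res)
    | completion o' n =>
      by_cases heq : o' = o
      · subst heq
        by_cases hle : d ≤ n
        · exact Or.inl ⟨n, by simp [completions], hle⟩
        · have hd' : (swStep st (.completion o' n)).dirty o' = some d := by
            simp only [swStep, hd, if_neg hle]
          rcases ih _ (swInv_step st _ hinv) o' d hd' with ⟨m, hm, hle'⟩ | res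
          · exact Or.inl ⟨m, by simp [completions, hm], hle'⟩
          · exact Or.inr (by simpa [swRun] using res)
      · have hd' : (swStep st (.completion o' n)).dirty o = some d := by
          simp only [swStep]
          rcases hcase : st.dirty o' with _ | d0 <;> simp only [hcase]
          · exact hd
          · split
            · simpa [Function.update_apply, if_neg (Ne.symm heq : o ≠ o')] using hd
            · exact hd
        rcases ih _ (swInv_step st _ hinv) o d hd' with ⟨m, hm, hle'⟩ | res
        · exact Or.inl ⟨m, by simp [completions, hm], hle'⟩
        · exact Or.inr (by simpa [swRun] using res)
    | read o' =>
      rcases ih (swStep st (.read o')) (swInv_step st _ hinv) o d hd with ⟨m, hm, hle'⟩ | res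
      · exact Or.inl ⟨m, by simpa [completions] using hm, hle'⟩
      · exact Or.inr (by simpa [swRun] using res)

lemma lemB : ∀ (tr : List (SwEvent O)) (st : SwState O), swInv st →
    ∀ o s, (o, s) ∈ issuedWrites st tr →
      (∃ n, (o, n) ∈ completions tr ∧ s ≤ n) ∨
      (∃ d, (swRun st tr).dirty o = some d ∧ s ≤ d) := by
  intro tr
  induction tr with
  | nil => intro st _ o s h; simp [issuedWrites] at h
  | cons e t ih =>
    intro st hinv o s h
    cases e with
    | write o' =>
      simp only [issuedWrites, Set.mem_union, Set.mem_singleton_iff, Prod.mk.injEq] at h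
      rcases h with ⟨rfl, rfl⟩ | h
      · have hd' : (swStep st (.write o)).dirty o = some (st.seq + 1) := by
          simp [swStep, Function.update]
        rcases lemA t _ (swInv_step st _ hinv) o _ hd' with ⟨n, hn, hle⟩ | res
        · exact Or.inl ⟨n, by simpa [completions] using hn, hle⟩
        · exact Or.inr (by simpa [swRun] using res)
      · rcases ih _ (swInv_step st _ hinv) o s h with ⟨n, hn, hle⟩ | res
        · exact Or.inl ⟨n, by simpa [completions] using hn, hle⟩
        · exact Or.inr (by simpa [swRun] using res)
    | completion o' n =>
      simp only [issuedWrites, Set.mem_union, Set.mem_empty_iff_false, false_or] at h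
      rcases ih _ (swInv_step st _ hinv) o s h with ⟨m, hm, hle⟩ | res
      · exact Or.inl ⟨m, by simp [completions, hm], hle⟩
      · exact Or.inr (by simpa [swRun] using res)
    | read o' =>
      simp only [issuedWrites, Set.mem_union, Set.mem_empty_iff_false, false_or] at h
      rcases ih _ (swInv_step st _ hinv) o s h with ⟨m, hm, hle⟩ | res
      · exact Or.inl ⟨m, by simpa [completions] using hm, hle⟩
      · exact Or.inr (by simpa [swRun] using res)


/-- Switch invariant preservation: after any sequence of write,
write-completion, and read operations (where completions are only generated for
previously issued writes), every write `w` issued with sequence number `s` on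
object `o` either has a processed completion for `o` with sequence number ≥ s,
or `o` is in the dirty set with `dirty_set(o) ≥ s`. -/
theorem harmonia_dirty_set_invariant
    (tr : List (SwEvent O))
    -- completions are only generated for previously issued writes
    (hcomp : ∀ o n, (o, n) ∈ completions tr → (o, n) ∈ issuedWrites (swInit (O := O)) tr) :
    ∀ o s, (o, s) ∈ issuedWrites (swInit (O := O)) tr →
      (∃ n, (o, n) ∈ completions tr ∧ s ≤ n) ∨
      (∃ d, (swRun (swInit (O := O)) tr).dirty o = some d ∧ s ≤ d) :=
  lemB tr swInit (by intro o d h; simp [swInit] at h)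
end

section
/- Stray dirty-set entry removal is safe: if an object o is in the dirty set with dirty_set(o) ≤ last_committed, then (under the in-order write-processing requirement) all writes to o have been committed, so removing o from the dirty set preserves the invariant that every object with an outstanding uncommitted write is in the dirty set. -/
/-- Stray dirty-set entry removal is safe. If object `o` is in the
dirty set with `dirty_set(o) = d ≤ last_committed`, the dirty-set entry for `o`
dominates all writes issued to `o`, writes are committed in sequence-number
order (every seq ≤ last_committed is committed), and the dirty-set invariant
holds, then all writes to `o` are committed, and removing `o` from the dirty
set preserves the invariant that every object with an outstanding uncommitted
write is in the dirty set. -/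
theorem harmonia_stray_removal_safe
    {O : Type} [DecidableEq O]
    (issued : O → ℕ → Prop)        -- a write with this seq was issued to this object
    (committed : ℕ → Prop)
    (dirty : O → Option ℕ)
    (last_committed : ℕ) (o : O) (d : ℕ)
    -- the invariant before removal
    (hinv : ∀ o' s, issued o' s → ¬ committed s → ∃ d', dirty o' = some d' ∧ s ≤ d')
    -- dirty_set(o) is the largest sequence number of any write issued to o
    (hmax : ∀ s, issued o s → s ≤ d)
    (hd : dirty o = some d)
    (hle : d ≤ last_committed)
    -- writes are committed in sequence-number order up to last_committed
    (hord : ∀ n, n ≤ last_committed → committed n) :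
    (∀ s, issued o s → committed s) ∧
    (∀ o' s, issued o' s → ¬ committed s →
      ∃ d', (fun x => if x = o then none else dirty x) o' = some d' ∧ s ≤ d') := by
  constructor
  · intro s hs
    exact hord s ((hmax s hs).trans hle)
  · intro o' s hs hnc
    by_cases h : o' = o
    · exact absurd (hord s ((hmax s (h ▸ hs)).trans hle)) hnc
    · simpa [h] using hinv o' s hs hnc
end

section
/- Linearizability of Harmonia reads (abstract version): consider a shared log (a sequence of writes with strictly increasing sequence numbers) and a set of read responses, where each read response for object o returns the maximal write to o in some prefix of the log that (a) contains all writes to o with sequence number ≤ the read's stamped last-committed value, and (b) contains only committed writes. Then every read response returns a committed write (or the bottom value), and its returned write is ≥ (in sequence-number order) every write returned by any read response that completed before this read was issued on the same object. -/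
/-- Abstract linearizability of Harmonia reads. A write is a pair
(object, sequence number); the shared log has strictly increasing sequence
numbers and a committed prefix of length `k`. Each read response for object
`obj r` returns (`ret r`) the maximal write to `obj r` in a prefix of length
`len r` of the log that (a) contains all writes to `obj r` with seq ≤ the
stamped last-committed value `lc r` and (b) contains only committed writes
(`len r ≤ k`). The stamped value dominates every write returned by any earlier
completed read on the same object. Then every read response returns a committed
write (or bottom = none), and dominates all earlier responses on the same
object. -/
theorem harmonia_reads_linearizable
    {O Read : Type}
    (log : List (O × ℕ)) (k : ℕ)
    (obj : Read → O) (lc : Read → ℕ) (len : Read → ℕ)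
    (ret : Read → Option (O × ℕ))
    (earlier : Read → Read → Prop)  -- earlier r' r : r' completed before r was issued
    (hsorted : log.Chain' (fun a b => a.2 < b.2))
    (hk : k ≤ log.length)
    (hlen : ∀ r, len r ≤ k)  -- (b) only committed writes in the read's prefix
    -- (a) the prefix contains all writes to obj r with seq ≤ lc r
    (hall : ∀ r, ∀ w ∈ log, w.1 = obj r → w.2 ≤ lc r → w ∈ log.take (len r))
    -- ret r is the maximal write to obj r in the prefix (none if there is no such write)
    (hret : ∀ r,
      (ret r = none ∧ ∀ w ∈ log.take (len r), w.1 ≠ obj r) ∨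
      (∃ w, ret r = some w ∧ w ∈ log.take (len r) ∧ w.1 = obj r ∧
        ∀ w' ∈ log.take (len r), w'.1 = obj r → w'.2 ≤ w.2))
    -- the stamped last-committed value dominates earlier responses on the same object
    (hstamp : ∀ r r' w', earlier r' r → obj r' = obj r → ret r' = some w' → w'.2 ≤ lc r) :
    (∀ r w, ret r = some w → w ∈ log.take k) ∧
    (∀ r r' w', earlier r' r → obj r' = obj r → ret r' = some w' →
      ∃ w, ret r = some w ∧ w'.2 ≤ w.2) := by
  constructor
  · intro r w hw
    rcases hret r with ⟨h0, _⟩ | ⟨w2, hw2, hmem, _⟩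
    · simp [h0] at hw
    · rw [hw] at hw2
      cases Option.some.inj hw2
      exact List.IsPrefix.subset (List.take_isPrefix_take.mpr (Or.inl (hlen r))) hmem
  · intro r r' w' he hobj hret'
    -- w' is in log and is a write to obj r with seq ≤ lc r
    rcases hret r' with ⟨h0, _⟩ | ⟨w2, hw2, hmem, hobj2, _⟩
    · simp [h0] at hret'
    · have hw2e : w2 = w' := by rw [hw2] at hret'; exact Option.some.inj hret'
      subst hw2e
      have hinlog : w2 ∈ log := List.mem_of_mem_take hmem
      have hle : w2.2 ≤ lc r := hstamp r r' w2 he hobj hret'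
      have hin : w2 ∈ log.take (len r) := hall r w2 hinlog (hobj ▸ hobj2) hle
      rcases hret r with ⟨_, hnone⟩ | ⟨w, hw, _, _, hmax⟩
      · exact absurd (hobj ▸ hobj2) (hnone w2 hin)
      · exact ⟨w, hw, hmax w2 hin (hobj ▸ hobj2)⟩
end

section
/- Completion implies freshness in read-ahead mode: in the TLA+ model, ProcessWriteCompletion(w) requires MaxCommittedWrite ≥ w (w is in the committed prefix, i.e., processed by all replicas); therefore, after a completion for w on object d is processed and d is removed from the dirty set, every replica's applied prefix contains w, and any subsequent single-replica read of d at any replica returns a write ≥ w. -/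
structure HWrite (O : Type) where
  switchNum : ℕ
  seq : ℕ
  item : O

def GTE {O : Type} (w1 w2 : HWrite O) : Prop :=
  w1.switchNum > w2.switchNum ∨ (w1.switchNum = w2.switchNum ∧ w1.seq ≥ w2.seq)

/-! Logs only grow by appending and commit points only increase, so the committed prefix stays a
prefix of every replica's later applied prefix; a read returns a maximal write on its object among
those applied, hence one that dominates `w`. -/

theorem List.IsPrefix.take_of_le {α : Type*} {l₁ l₂ : List α} (h : l₁ <+: l₂) {m n : ℕ}
    (hmn : m ≤ n) : l₁.take m <+: l₂.take n :=
  (h.take m).trans (List.take_prefix_take_left hmn)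

theorem List.IsPrefix.mem_take_of_mem_take {α : Type*} {l₁ l₂ : List α} (h : l₁ <+: l₂)
    {m n : ℕ} (hmn : m ≤ n) {a : α} (ha : a ∈ l₁.take m) : a ∈ l₂.take n :=
  (h.take_of_le hmn).subset ha

theorem harmonia_completion_implies_freshness_general
    {O Rep : Type}
    (L : List (HWrite O)) (cp : Rep → ℕ) (k : ℕ)
    (hk : ∀ r, k ≤ cp r)                -- k = min over replicas of cp r
    (w : HWrite O)
    (hw : w ∈ L.take k) :               -- guard: w is in the committed prefix
    (∀ r : Rep, w ∈ L.take (cp r)) ∧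
    (∀ (L' : List (HWrite O)) (cp' : Rep → ℕ), L <+: L' → (∀ r, cp r ≤ cp' r) →
      ∀ (r : Rep) (ret : HWrite O),
        (ret ∈ L'.take (cp' r) ∧ ret.item = w.item ∧
          ∀ x ∈ L'.take (cp' r), x.item = w.item → GTE ret x) →
        GTE ret w) := by
  refine ⟨fun r => List.prefix_rfl.mem_take_of_mem_take (hk r) hw, ?_⟩
  rintro L' cp' hLL' hcp' r ret ⟨-, -, hret_max⟩
  have hw_applied : w ∈ L'.take (cp' r) :=
    hLL'.mem_take_of_mem_take ((hk r).trans (hcp' r)) hw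
  exact hret_max w hw_applied rfl

/-- Completion implies freshness in read-ahead mode. The guard of
`ProcessWriteCompletion(w)` puts `w` in the committed prefix `L.take k`, where
`k = min_r cp r`; hence every replica's applied prefix `L.take (cp r)` contains
`w`, and any subsequent single-replica read of `w`'s object at any replica
(against an extended log `L'` and commit points `cp' r ≥ cp r`, since logs grow
by appending and commit points are non-decreasing) returns a write ≥ w. -/
theorem harmonia_completion_implies_freshness
    {O Rep : Type}
    (L : List (HWrite O)) (cp : Rep → ℕ) (k : ℕ)
    (hk : ∀ r, k ≤ cp r)                -- k = min over replicas of cp r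
    (hcp : ∀ r, cp r ≤ L.length)
    (w : HWrite O)
    (hw : w ∈ L.take k) :               -- guard: w is in the committed prefix
    (∀ r : Rep, w ∈ L.take (cp r)) ∧
    (∀ (L' : List (HWrite O)) (cp' : Rep → ℕ), L <+: L' → (∀ r, cp r ≤ cp' r) →
      ∀ (r : Rep) (ret : HWrite O),
        (ret ∈ L'.take (cp' r) ∧ ret.item = w.item ∧
          ∀ x ∈ L'.take (cp' r), x.item = w.item → GTE ret x) →
        GTE ret w) :=
  harmonia_completion_implies_freshness_general L cp k hk w hw
end
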